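/- Let f : ℝⁿ → ℝ be a smooth positive function with inf f > 0 (i.e. there exists m > 0 with f(x) ≥ m for all x ∈ ℝⁿ). Then the spacelike geodesic trajectories for f are complete: for every s₀ ∈ ℝ, x₀ ∈ ℝⁿ and v₀ ∈ ℝⁿ there exists a spacelike geodesic trajectory σ : ℝ → ℝⁿ defined on all of ℝ with σ(s₀) = x₀ and σ'(s₀) = v₀. -/

import Mathlib

local notation "⟪" x ", " y "⟫_ℝ" => @inner ℝ _ _ x y
open Real Set Filter Topology

/-- The gradient `∇u` of `u = log f` on `ℝⁿ`. -/
noncomputable def gradlog {n : ℕ} (f : EuclideanSpace ℝ (Fin n) → ℝ)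
    (x : EuclideanSpace ℝ (Fin n)) : EuclideanSpace ℝ (Fin n) :=
  gradient (fun y => Real.log (f y)) x

/-- `σ` (with derivative `σ'`) is a spacelike geodesic trajectory for `f` on `J`:
`σ'' + 2⟨∇u(σ), σ'⟩·σ' − ‖σ'‖²·∇u(σ) = 0` on `J`, where `u = log f`. -/
def IsSpacelikeGeo {n : ℕ} (f : EuclideanSpace ℝ (Fin n) → ℝ)
    (σ σ' : ℝ → EuclideanSpace ℝ (Fin n)) (J : Set ℝ) : Prop :=
  (∀ s ∈ J, HasDerivAt σ (σ' s) s) ∧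
  ∀ s ∈ J, HasDerivAt σ'
    (-((2 * ⟪gradlog f (σ s), σ' s⟫_ℝ) • σ' s) + (‖σ' s‖ ^ 2) • gradlog f (σ s)) s

open Metric
open scoped Manifold NNReal ContDiff


open Real Set Filter Topology Metric
open scoped Manifold NNReal ContDiff

section AuxODE
variable {P : Type*} [NormedAddCommGroup P] [NormedSpace ℝ P]

theorem myGlobalOfUniform (v : P → P) (hv : ContDiff ℝ 1 v) {ε : ℝ} (hε : 0 < ε)
    (h : ∀ x : P, ∃ γ : ℝ → P, γ 0 = x ∧ ∀ t ∈ Ioo (-ε) ε, HasDerivAt γ (v (γ t)) t)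
    (x : P) : ∃ γ : ℝ → P, γ 0 = x ∧ ∀ t, HasDerivAt γ (v (γ t)) t := by
  have hconv : ∀ (γ : ℝ → P) (s : Set ℝ), IsOpen s → (
      IsMIntegralCurveOn (I := 𝓘(ℝ, P)) γ (fun x => (v x : TangentSpace 𝓘(ℝ, P) x)) s ↔
        ∀ t ∈ s, HasDerivAt γ (v (γ t)) t) := by
    intro γ s hs
    simp only [IsMIntegralCurveOn, hasMFDerivWithinAt_iff_hasFDerivWithinAt, hasDerivAt_iff_hasFDerivAt]
    refine forall₂_congr fun t ht => ⟨fun h => ?_, fun h => ?_⟩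
    · exact (hasMFDerivWithinAt_iff_hasFDerivWithinAt.mp h).hasFDerivAt (hs.mem_nhds ht)
    · exact hasMFDerivWithinAt_iff_hasFDerivWithinAt.mpr h.hasFDerivWithinAt
  have hsec : ContMDiff 𝓘(ℝ, P) 𝓘(ℝ, P).tangent 1
      (fun x ↦ (⟨x, v x⟩ : TangentBundle 𝓘(ℝ, P) P)) := by
    have h1 := contMDiff_tangentBundleModelSpaceHomeomorph_symm (I := 𝓘(ℝ, P)) (n := 1)
    have h2 := (contDiff_id.prodMk hv).contMDiff (n := 1)
    rw [modelWithCornersSelf_prod] at h2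
    exact ContMDiff.comp (I' := 𝓘(ℝ, P).tangent) (M' := ModelProd P P) h1 h2
  obtain ⟨γ, h0, hγ⟩ := exists_isMIntegralCurve_of_isMIntegralCurveOn hsec hε
    (fun x => by obtain ⟨γ, h0, hγ⟩ := h x; exact ⟨γ, h0, (hconv γ _ isOpen_Ioo).mpr hγ⟩) x
  refine ⟨γ, h0, fun t => ?_⟩
  exact (hconv γ univ isOpen_univ).mp (isMIntegralCurve_iff_isMIntegralCurveOn.mp hγ) t (mem_univ t)

theorem myUniformLocal [CompleteSpace P] (v : P → P) (M : ℝ) (K : ℝ≥0)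
    (hM : ∀ x, ‖v x‖ ≤ M) (hK : LipschitzWith K v) :
    ∃ ε > (0:ℝ), ∀ x₀ : P, ∃ γ : ℝ → P, γ 0 = x₀ ∧
      ∀ t ∈ Ioo (-ε) ε, HasDerivAt γ (v (γ t)) t := by
  have hM0 : 0 ≤ M := le_trans (norm_nonneg (v 0)) (hM 0)
  set ε : ℝ := 1 / (M + 1) with hεdef
  have hε : 0 < ε := by positivity
  refine ⟨ε, hε, fun x₀ => ?_⟩
  have hpl : IsPicardLindelof (fun _ => v) (tmin := -ε) (tmax := ε) ⟨0, by constructor <;> linarith⟩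
      x₀ 1 0 M.toNNReal K :=
    { lipschitzOnWith := fun t _ => hK.lipschitzOnWith
      continuousOn := fun x _ => continuousOn_const
      norm_le := fun t _ x _ => by rw [Real.coe_toNNReal _ hM0]; exact hM x
      mul_max_le := by
        simp only [Real.coe_toNNReal _ hM0, NNReal.coe_one, NNReal.coe_zero, sub_zero, zero_sub, neg_neg,
          max_self, hεdef, mul_one_div]
        rw [div_le_one (by positivity)]
        linarith }
  obtain ⟨γ, h0, hγ⟩ := hpl.exists_eq_forall_mem_Icc_hasDerivWithinAt₀
  exact ⟨γ, h0, fun t ht =>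
    (hγ t (Ioo_subset_Icc_self ht)).hasDerivAt (Icc_mem_nhds ht.1 ht.2)⟩

theorem myGlobalCompactSupport [CompleteSpace P] [FiniteDimensional ℝ P] (w : P → P)
    (hw : ContDiff ℝ ∞ w) (hsupp : HasCompactSupport w) (x : P) :
    ∃ γ : ℝ → P, γ 0 = x ∧ ∀ t, HasDerivAt γ (w (γ t)) t := by
  obtain ⟨M, hM⟩ := (continuous_norm.comp hw.continuous).bounded_above_of_compact_support
    (hsupp.comp_left norm_zero)
  have hdiff : Differentiable ℝ w := hw.differentiable (by norm_num)
  have hfc : Continuous (fderiv ℝ w) := (hw.fderiv_right (m := ∞) (by simp)).continuous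
  obtain ⟨B, hB⟩ := (continuous_norm.comp hfc).bounded_above_of_compact_support
    ((hsupp.fderiv ℝ).comp_left norm_zero)
  set K : ℝ≥0 := ⟨max B 0, le_max_right _ _⟩ with hKdef
  have hK : LipschitzWith K w := by
    apply lipschitzWith_of_nnnorm_fderiv_le hdiff
    intro x
    rw [← NNReal.coe_le_coe]
    exact le_trans (by simpa using hB x) (le_max_left _ _)
  obtain ⟨ε, hε, hloc⟩ := myUniformLocal w M K (fun x => by simpa using hM x) hK
  exact myGlobalOfUniform w (hw.of_le (by norm_num)) hε hloc x

end AuxODE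

noncomputable def geoF {n : ℕ} (f : EuclideanSpace ℝ (Fin n) → ℝ) :
    EuclideanSpace ℝ (Fin n) × EuclideanSpace ℝ (Fin n) →
      EuclideanSpace ℝ (Fin n) × EuclideanSpace ℝ (Fin n) :=
  fun p => (p.2, -((2 * ⟪gradlog f p.1, p.2⟫_ℝ) • p.2) + (‖p.2‖ ^ 2) • gradlog f p.1)

variable {n : ℕ} {f : EuclideanSpace ℝ (Fin n) → ℝ}

theorem gradlog_contDiff (hf : ContDiff ℝ (⊤ : ℕ∞) f) (hfpos : ∀ x, 0 < f x) :
    ContDiff ℝ ∞ (gradlog f) := by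
  have hu : ContDiff ℝ ∞ (fun y => Real.log (f y)) := (hf.of_le (by simp)).log (fun x => (hfpos x).ne')
  have : gradlog f = fun x => (InnerProductSpace.toDual ℝ (EuclideanSpace ℝ (Fin n))).symm
      (fderiv ℝ (fun y => Real.log (f y)) x) := rfl
  rw [this]
  exact (InnerProductSpace.toDual ℝ (EuclideanSpace ℝ (Fin n))).symm.contDiff.comp
    (hu.fderiv_right (m := ∞) (by simp))

theorem inner_gradlog (x w : EuclideanSpace ℝ (Fin n)) :
    ⟪gradlog f x, w⟫_ℝ = fderiv ℝ (fun y => Real.log (f y)) x w :=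
  InnerProductSpace.toDual_symm_apply

theorem geoF_contDiff (hf : ContDiff ℝ (⊤ : ℕ∞) f) (hfpos : ∀ x, 0 < f x) :
    ContDiff ℝ ∞ (geoF f) := by
  have hG := gradlog_contDiff hf hfpos
  refine contDiff_snd.prodMk ?_
  refine ContDiff.add ?_ ?_
  · exact ((contDiff_const.mul ((hG.comp contDiff_fst).inner ℝ contDiff_snd)).smul contDiff_snd).neg
  · exact (contDiff_snd.norm_sq ℝ).smul (hG.comp contDiff_fst)

section Main

variable {n : ℕ} {f : EuclideanSpace ℝ (Fin n) → ℝ}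

theorem myCompFst {A B : Type*} [NormedAddCommGroup A] [NormedSpace ℝ A]
    [NormedAddCommGroup B] [NormedSpace ℝ B] {γ : ℝ → A × B} {d : A × B} {τ : ℝ}
    (h : HasDerivAt γ d τ) : HasDerivAt (fun t => (γ t).1) d.1 τ :=
  (ContinuousLinearMap.fst ℝ A B).hasFDerivAt.comp_hasDerivAt τ h

theorem myCompSnd {A B : Type*} [NormedAddCommGroup A] [NormedSpace ℝ A]
    [NormedAddCommGroup B] [NormedSpace ℝ B] {γ : ℝ → A × B} {d : A × B} {τ : ℝ}
    (h : HasDerivAt γ d τ) : HasDerivAt (fun t => (γ t).2) d.2 τ :=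
  (ContinuousLinearMap.snd ℝ A B).hasFDerivAt.comp_hasDerivAt τ h

theorem energy_deriv (hfc : ContDiff ℝ (⊤ : ℕ∞) f) (hfpos : ∀ x, 0 < f x)
    {γ : ℝ → EuclideanSpace ℝ (Fin n) × EuclideanSpace ℝ (Fin n)} {τ : ℝ}
    (h : HasDerivAt γ (geoF f (γ τ)) τ) :
    HasDerivAt (fun t => Real.exp (2 * Real.log (f (γ t).1)) * ⟪(γ t).2, (γ t).2⟫_ℝ) 0 τ := by
  have hu : ContDiff ℝ ∞ (fun y => Real.log (f y)) :=
    (hfc.of_le (by simp)).log (fun x => (hfpos x).ne')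
  have hudiff : Differentiable ℝ (fun y => Real.log (f y)) :=
    hu.differentiable (by norm_num)
  have hx : HasDerivAt (fun t => (γ t).1) ((γ τ).2) τ := myCompFst h
  have hv : HasDerivAt (fun t => (γ t).2) ((geoF f (γ τ)).2) τ := myCompSnd h
  have h1 : HasDerivAt (fun t => Real.log (f (γ t).1))
      ⟪gradlog f (γ τ).1, (γ τ).2⟫_ℝ τ := by
    have := (hudiff ((γ τ).1)).hasFDerivAt.comp_hasDerivAt τ hx
    rwa [← inner_gradlog] at this
  have h2 : HasDerivAt (fun t => Real.exp (2 * Real.log (f (γ t).1)))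
      (Real.exp (2 * Real.log (f (γ τ).1)) * (2 * ⟪gradlog f (γ τ).1, (γ τ).2⟫_ℝ)) τ :=
    (h1.const_mul 2).exp
  have h3 : HasDerivAt (fun t => ⟪(γ t).2, (γ t).2⟫_ℝ)
      (⟪(γ τ).2, (geoF f (γ τ)).2⟫_ℝ + ⟪(geoF f (γ τ)).2, (γ τ).2⟫_ℝ) τ :=
    hv.inner ℝ hv
  have h4 := h2.mul h3
  have hW : ⟪(geoF f (γ τ)).2, (γ τ).2⟫_ℝ =
      -(2 * ⟪gradlog f (γ τ).1, (γ τ).2⟫_ℝ * ‖(γ τ).2‖ ^ 2)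
        + ‖(γ τ).2‖ ^ 2 * ⟪gradlog f (γ τ).1, (γ τ).2⟫_ℝ := by
    show ⟪-((2 * ⟪gradlog f (γ τ).1, (γ τ).2⟫_ℝ) • (γ τ).2)
        + (‖(γ τ).2‖ ^ 2) • gradlog f (γ τ).1, (γ τ).2⟫_ℝ = _
    rw [inner_add_left, inner_neg_left, real_inner_smul_left, real_inner_smul_left,
      real_inner_self_eq_norm_sq]
  have hval : Real.exp (2 * Real.log (f (γ τ).1)) * (2 * ⟪gradlog f (γ τ).1, (γ τ).2⟫_ℝ)
        * ⟪(γ τ).2, (γ τ).2⟫_ℝ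
      + Real.exp (2 * Real.log (f (γ τ).1)) *
        (⟪(γ τ).2, (geoF f (γ τ)).2⟫_ℝ + ⟪(geoF f (γ τ)).2, (γ τ).2⟫_ℝ) = 0 := by
    rw [show ⟪(γ τ).2, (geoF f (γ τ)).2⟫_ℝ = ⟪(geoF f (γ τ)).2, (γ τ).2⟫_ℝ from
      real_inner_comm _ _, hW, real_inner_self_eq_norm_sq]
    ring
  exact hval ▸ h4

theorem energy_const (hfc : ContDiff ℝ (⊤ : ℕ∞) f) (hfpos : ∀ x, 0 < f x)
    {γ : ℝ → EuclideanSpace ℝ (Fin n) × EuclideanSpace ℝ (Fin n)} {b : ℝ} (hb : 0 ≤ b)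
    (hode : ∀ τ ∈ Icc (-b) b, HasDerivAt γ (geoF f (γ τ)) τ) :
    ∀ τ ∈ Icc (-b) b, Real.exp (2 * Real.log (f (γ τ).1)) * ⟪(γ τ).2, (γ τ).2⟫_ℝ
      = Real.exp (2 * Real.log (f (γ 0).1)) * ⟪(γ 0).2, (γ 0).2⟫_ℝ := by
  set g : ℝ → ℝ :=
    fun t => Real.exp (2 * Real.log (f (γ t).1)) * ⟪(γ t).2, (γ t).2⟫_ℝ with hgdef
  have hg : ∀ τ ∈ Icc (-b) b, HasDerivAt g 0 τ :=
    fun τ hτ => energy_deriv hfc hfpos (hode τ hτ)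
  have hpos : ∀ τ ∈ Icc 0 b, g τ = g 0 := by
    apply constant_of_has_deriv_right_zero
    · intro τ hτ
      exact (hg τ ⟨le_trans (neg_nonpos.mpr hb) hτ.1, hτ.2⟩).continuousAt.continuousWithinAt
    · intro τ hτ
      exact (hg τ ⟨by linarith [hτ.1], le_of_lt hτ.2⟩).hasDerivWithinAt
  have hneg : ∀ τ ∈ Icc 0 b, g (-τ) = g 0 := by
    have h2 : ∀ τ ∈ Icc 0 b, (fun t => g (-t)) τ = (fun t => g (-t)) 0 := by
      apply constant_of_has_deriv_right_zero
      · intro τ hτ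
        exact ((hg (-τ) ⟨by linarith [hτ.2], by linarith [hτ.1]⟩).comp τ
          (hasDerivAt_neg τ)).continuousAt.continuousWithinAt
      · intro τ hτ
        have := (hg (-τ) ⟨by linarith [hτ.2.le], by linarith [hτ.1]⟩).comp τ (hasDerivAt_neg τ)
        simpa [Function.comp_def] using this.hasDerivWithinAt
    intro τ hτ
    simpa using h2 τ hτ
  intro τ hτ
  rcases le_total 0 τ with h | h
  · exact hpos τ ⟨h, hτ.2⟩
  · have := hneg (-τ) ⟨by linarith, by linarith [hτ.1]⟩
    simpa [hgdef] using this

theorem perT (hfc : ContDiff ℝ (⊤ : ℕ∞) f) (hfpos : ∀ x, 0 < f x) {m : ℝ} (hm : 0 < m)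
    (hfm : ∀ x, m ≤ f x) (x₀ v₀ : EuclideanSpace ℝ (Fin n)) {T : ℝ} (hT : 0 < T) :
    ∃ γ : ℝ → EuclideanSpace ℝ (Fin n) × EuclideanSpace ℝ (Fin n), γ 0 = (x₀, v₀) ∧
      (∀ τ ∈ Icc (-T) T, HasDerivAt γ (geoF f (γ τ)) τ) ∧
      (∀ τ ∈ Icc (-T) T, ‖(γ τ).1 - x₀‖ ≤ f x₀ * ‖v₀‖ / m * T ∧
        ‖(γ τ).2‖ ≤ f x₀ * ‖v₀‖ / m) := by
  set C : ℝ := f x₀ * ‖v₀‖ / m with hCdef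
  have hC0 : 0 ≤ C := div_nonneg (mul_nonneg (hfpos x₀).le (norm_nonneg _)) hm.le
  -- speed bound from energy identity
  have hspeed : ∀ (x v : EuclideanSpace ℝ (Fin n)),
      Real.exp (2 * Real.log (f x)) * ⟪v, v⟫_ℝ
        = Real.exp (2 * Real.log (f x₀)) * ⟪v₀, v₀⟫_ℝ → ‖v‖ ≤ C := by
    intro x v h
    have e1 : ∀ (y w : EuclideanSpace ℝ (Fin n)),
        Real.exp (2 * Real.log (f y)) * ⟪w, w⟫_ℝ = (f y * ‖w‖) ^ 2 := by
      intro y w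
      rw [real_inner_self_eq_norm_sq, two_mul, Real.exp_add, Real.exp_log (hfpos y)]
      ring
    rw [e1, e1] at h
    have h1 : 0 ≤ f x * ‖v‖ := mul_nonneg (hfpos x).le (norm_nonneg _)
    have h2 : 0 ≤ f x₀ * ‖v₀‖ := mul_nonneg (hfpos x₀).le (norm_nonneg _)
    have heq : f x * ‖v‖ = f x₀ * ‖v₀‖ := by nlinarith
    rw [hCdef, le_div_iff₀ hm]
    calc ‖v‖ * m = m * ‖v‖ := mul_comm _ _
      _ ≤ f x * ‖v‖ := mul_le_mul_of_nonneg_right (hfm x) (norm_nonneg _)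
      _ = f x₀ * ‖v₀‖ := heq
  -- truncated vector field
  set rIn : ℝ := ‖x₀‖ + C * T + C + 2 with hrIndef
  have hrIn : 0 < rIn := by positivity
  set χ : ContDiffBump (0 : EuclideanSpace ℝ (Fin n) × EuclideanSpace ℝ (Fin n)) :=
    ⟨rIn, rIn + 1, hrIn, lt_add_one _⟩ with hχdef
  set w : EuclideanSpace ℝ (Fin n) × EuclideanSpace ℝ (Fin n) →
      EuclideanSpace ℝ (Fin n) × EuclideanSpace ℝ (Fin n) :=
    fun p => χ p • geoF f p with hwdef
  have hwsmooth : ContDiff ℝ ∞ w := χ.contDiff.smul (geoF_contDiff hfc hfpos)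
  have hwsupp : HasCompactSupport w := χ.hasCompactSupport.smul_right
  obtain ⟨γ, hγ0, hγ⟩ := myGlobalCompactSupport w hwsmooth hwsupp (x₀, v₀)
  have hcont : Continuous γ := by
    rw [continuous_iff_continuousAt]; exact fun t => (hγ t).continuousAt
  -- on the good region, w agrees with geoF f
  have hKχ : ∀ p : EuclideanSpace ℝ (Fin n) × EuclideanSpace ℝ (Fin n),
      ‖p.1 - x₀‖ ≤ C * T + 1 → ‖p.2‖ ≤ C + 1 → w p = geoF f p := by
    intro p h1 h2
    have hp1 : ‖p.1‖ ≤ ‖x₀‖ + (C * T + 1) := by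
      have := norm_add_le (p.1 - x₀) x₀
      rw [sub_add_cancel] at this
      linarith
    have hmem : p ∈ Metric.closedBall (0 : EuclideanSpace ℝ (Fin n) ×
        EuclideanSpace ℝ (Fin n)) χ.rIn := by
      rw [mem_closedBall_zero_iff]
      have : ‖p‖ = max ‖p.1‖ ‖p.2‖ := rfl
      rw [this]
      have hrin : χ.rIn = rIn := rfl
      rw [hrin, hrIndef]
      have hn0 : 0 ≤ ‖x₀‖ := norm_nonneg _
      have hCT : 0 ≤ C * T := mul_nonneg hC0 hT.le
      apply max_le <;> linarith
    have h1 : χ p = 1 := χ.one_of_mem_closedBall hmem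
    rw [hwdef]
    simp only [h1, one_smul]
  -- the invariant predicate
  set Q : ℝ → Prop := fun τ =>
    Real.exp (2 * Real.log (f (γ τ).1)) * ⟪(γ τ).2, (γ τ).2⟫_ℝ
      = Real.exp (2 * Real.log (f x₀)) * ⟪v₀, v₀⟫_ℝ ∧ ‖(γ τ).1 - x₀‖ ≤ C * |τ| with hQdef
  have hQ0 : Q 0 := by
    constructor
    · rw [hγ0]
    · rw [hγ0]; simp
  have hQclosed : IsClosed {τ | Q τ} := by
    apply IsClosed.inter
    · apply isClosed_eq _ continuous_const
      have hucont : Continuous (fun y => Real.log (f y)) :=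
        (ContDiff.log (n := ∞) (hfc.of_le (by simp)) (fun x => (hfpos x).ne')).continuous
      exact (Real.continuous_exp.comp (continuous_const.mul
          (hucont.comp (continuous_fst.comp hcont)))).mul
        ((continuous_snd.comp hcont).inner (continuous_snd.comp hcont))
    · exact isClosed_le (continuous_norm.comp ((continuous_fst.comp hcont).sub
        continuous_const)) (continuous_const.mul continuous_abs)
  -- the set of radii on which Q holds
  set A : Set ℝ := {r | r ∈ Icc (0:ℝ) T ∧ ∀ τ ∈ Icc (-r) r, Q τ} with hAdef
  have hA0 : (0:ℝ) ∈ A := by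
    refine ⟨⟨le_refl 0, hT.le⟩, fun τ hτ => ?_⟩
    have : τ = 0 := le_antisymm hτ.2 (by simpa using hτ.1)
    rw [this]; exact hQ0
  have hAbdd : BddAbove A := ⟨T, fun r hr => hr.1.2⟩
  have hAne : A.Nonempty := ⟨0, hA0⟩
  set rs : ℝ := sSup A with hrsdef
  have hrs0 : 0 ≤ rs := le_csSup hAbdd hA0
  have hrsT : rs ≤ T := csSup_le hAne (fun r hr => hr.1.2)
  have hrsA : rs ∈ A := by
    refine ⟨⟨hrs0, hrsT⟩, ?_⟩
    rcases eq_or_lt_of_le hrs0 with h0 | h0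
    · intro τ hτ
      have : τ = 0 := le_antisymm (by rw [← h0] at hτ; exact hτ.2)
        (by rw [← h0] at hτ; simpa using hτ.1)
      rw [this]; exact hQ0
    · have hsub : Ioo (-rs) rs ⊆ {τ | Q τ} := by
        intro τ hτ
        have habs : |τ| < rs := abs_lt.mpr ⟨hτ.1, hτ.2⟩
        obtain ⟨r, hrA, hlt⟩ := exists_lt_of_lt_csSup hAne habs
        
        exact hrA.2 τ ⟨by linarith [neg_abs_le τ], by linarith [le_abs_self τ]⟩
      have hsub2 : Icc (-rs) rs ⊆ {τ | Q τ} := by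
        rw [← closure_Ioo (by linarith : -rs ≠ rs)]
        exact closure_minimal hsub hQclosed
      exact fun τ hτ => hsub2 hτ
  -- the key claim : rs = T
  have hmemKg : ∀ r ≤ T, (∀ τ ∈ Icc (-r) r, Q τ) → ∀ τ ∈ Icc (-r) r,
      ‖(γ τ).1 - x₀‖ < C * T + 1 ∧ ‖(γ τ).2‖ < C + 1 := by
    intro r hrT' hQr τ hτ
    obtain ⟨hE, hP⟩ := hQr τ hτ
    have habs : |τ| ≤ r := abs_le.mpr ⟨hτ.1, hτ.2⟩
    constructor
    · have : C * |τ| ≤ C * T := mul_le_mul_of_nonneg_left (le_trans habs hrT') hC0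
      linarith
    · exact lt_of_le_of_lt (hspeed _ _ hE) (lt_add_one C)
  have hrsT' : rs = T := by
    by_contra hne
    have hlt : rs < T := lt_of_le_of_ne hrsT hne
    -- open region around the trajectory
    set Kg : Set (EuclideanSpace ℝ (Fin n) × EuclideanSpace ℝ (Fin n)) :=
      {p | ‖p.1 - x₀‖ < C * T + 1 ∧ ‖p.2‖ < C + 1} with hKgdef
    have hKgopen : IsOpen Kg := by
      apply IsOpen.inter
      · exact isOpen_lt (continuous_norm.comp (continuous_fst.sub continuous_const))
          continuous_const
      · exact isOpen_lt (continuous_norm.comp continuous_snd) continuous_const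
    have hpre : IsOpen (γ ⁻¹' Kg) := hKgopen.preimage hcont
    have hsubpre : Icc (-rs) rs ⊆ γ ⁻¹' Kg :=
      fun τ hτ => hmemKg rs hrsT hrsA.2 τ hτ
    obtain ⟨δ₀, hδ₀, hthick⟩ :=
      (isCompact_Icc (a := -rs) (b := rs)).exists_thickening_subset_open hpre hsubpre
    set δ : ℝ := min (δ₀ / 2) (T - rs) with hδdef
    have hδpos : 0 < δ := lt_min (by linarith) (by linarith)
    set b : ℝ := rs + δ with hbdef
    have hbT : b ≤ T := by
      have := min_le_right (δ₀ / 2) (T - rs)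
      rw [hbdef, hδdef]; linarith
    have hb0 : 0 ≤ b := by positivity
    have hmemb : ∀ τ ∈ Icc (-b) b, γ τ ∈ Kg := by
      intro τ hτ
      apply hthick
      rw [Metric.mem_thickening_iff]
      refine ⟨max (-rs) (min τ rs), ⟨le_max_left _ _, max_le (by linarith) (min_le_right _ _)⟩, ?_⟩
      rw [Real.dist_eq, abs_lt]
      have hδδ : δ ≤ δ₀ / 2 := min_le_left _ _
      rcases le_total τ (-rs) with h1 | h1
      · have : max (-rs) (min τ rs) = -rs := by
          rw [max_eq_left]
          exact le_trans (min_le_left _ _) h1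
        rw [this]
        constructor <;> [linarith [hτ.1]; linarith]
      · rcases le_total rs τ with h2 | h2
        · have : max (-rs) (min τ rs) = rs := by
            rw [min_eq_right h2, max_eq_right (by linarith)]
          rw [this]
          constructor <;> [linarith; linarith [hτ.2]]
        · have : max (-rs) (min τ rs) = τ := by
            rw [min_eq_left h2, max_eq_right h1]
          rw [this]
          constructor <;> linarith
    -- true ODE on Icc (-b) b
    have hode : ∀ τ ∈ Icc (-b) b, HasDerivAt γ (geoF f (γ τ)) τ := by
      intro τ hτ
      have h := hγ τ
      obtain ⟨m1, m2⟩ := hmemb τ hτ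
      rwa [hKχ (γ τ) m1.le m2.le] at h
    -- energy conservation on Icc (-b) b
    have hE : ∀ τ ∈ Icc (-b) b,
        Real.exp (2 * Real.log (f (γ τ).1)) * ⟪(γ τ).2, (γ τ).2⟫_ℝ
          = Real.exp (2 * Real.log (f x₀)) * ⟪v₀, v₀⟫_ℝ := by
      intro τ hτ
      have := energy_const hfc hfpos hb0 hode τ hτ
      rw [hγ0] at this
      exact this
    have hspeedb : ∀ τ ∈ Icc (-b) b, ‖(γ τ).2‖ ≤ C :=
      fun τ hτ => hspeed _ _ (hE τ hτ)
    -- position bound on Icc (-b) b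
    have hx' : ∀ τ ∈ Icc (-b) b, HasDerivAt (fun t => (γ t).1) ((γ τ).2) τ :=
      fun τ hτ => myCompFst (hode τ hτ)
    have hposb : ∀ τ ∈ Icc (-b) b, ‖(γ τ).1 - x₀‖ ≤ C * |τ| := by
      have hfwd : ∀ τ ∈ Icc (0:ℝ) b, ‖(γ τ).1 - (γ 0).1‖ ≤ C * (τ - 0) := by
        apply norm_image_sub_le_of_norm_deriv_le_segment'
        · intro τ hτ
          exact (hx' τ ⟨by linarith [hτ.1], hτ.2⟩).hasDerivWithinAt
        · intro τ hτ
          exact hspeedb τ ⟨by linarith [hτ.1], hτ.2.le⟩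
      have hbwd : ∀ τ ∈ Icc (0:ℝ) b, ‖(γ (-τ)).1 - (γ (-0)).1‖ ≤ C * (τ - 0) := by
        have hder : ∀ τ ∈ Icc (0:ℝ) b, HasDerivWithinAt (fun t => (γ (-t)).1)
            ((-1 : ℝ) • (γ (-τ)).2) (Icc 0 b) τ := by
          intro τ hτ
          have h1 : HasDerivAt (fun t : ℝ => -t) (-1) τ := hasDerivAt_neg τ
          have := (hx' (-τ) ⟨by linarith [hτ.2], by linarith [hτ.1]⟩).scomp τ h1
          exact this.hasDerivWithinAt
        apply norm_image_sub_le_of_norm_deriv_le_segment' hder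
        · intro τ hτ
          rw [norm_smul]
          simpa using hspeedb (-τ) ⟨by linarith [hτ.2.le], by linarith [hτ.1]⟩
      intro τ hτ
      rcases le_total 0 τ with h | h
      · have := hfwd τ ⟨h, hτ.2⟩
        rw [hγ0] at this
        simpa [abs_of_nonneg h] using this
      · have := hbwd (-τ) ⟨by linarith, by linarith [hτ.1]⟩
        rw [neg_zero, hγ0] at this
        simp only [neg_neg] at this
        simpa [abs_of_nonpos h] using this
    -- b ∈ A, contradiction
    have hbA : b ∈ A := ⟨⟨hb0, hbT⟩, fun τ hτ => ⟨hE τ hτ, hposb τ hτ⟩⟩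
    have : b ≤ rs := le_csSup hAbdd hbA
    rw [hbdef] at this
    linarith
  -- conclusion
  have hQT : ∀ τ ∈ Icc (-T) T, Q τ := by rw [← hrsT']; exact hrsA.2
  have hodeT : ∀ τ ∈ Icc (-T) T, HasDerivAt γ (geoF f (γ τ)) τ := by
    intro τ hτ
    have h := hγ τ
    obtain ⟨m1, m2⟩ := hmemKg T le_rfl hQT τ hτ
    rwa [hKχ (γ τ) m1.le m2.le] at h
  refine ⟨γ, hγ0, hodeT, fun τ hτ => ?_⟩
  obtain ⟨hEτ, hPτ⟩ := hQT τ hτ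
  have habs : |τ| ≤ T := abs_le.mpr ⟨hτ.1, hτ.2⟩
  refine ⟨le_trans hPτ (mul_le_mul_of_nonneg_left habs hC0), hspeed _ _ hEτ⟩


theorem myLipOnBall (hfc : ContDiff ℝ (⊤ : ℕ∞) f) (hfpos : ∀ x, 0 < f x) (ρ : ℝ) :
    ∃ K : ℝ≥0, LipschitzOnWith K (geoF f)
      (Metric.closedBall (0 : EuclideanSpace ℝ (Fin n) × EuclideanSpace ℝ (Fin n)) ρ) := by
  have hF : ContDiff ℝ ∞ (geoF f) := geoF_contDiff hfc hfpos
  have hfd : Continuous (fderiv ℝ (geoF f)) := (hF.fderiv_right (m := ∞) (by simp)).continuous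
  obtain ⟨B, hB⟩ := (isCompact_closedBall
    (0 : EuclideanSpace ℝ (Fin n) × EuclideanSpace ℝ (Fin n)) ρ).exists_bound_of_continuousOn
    hfd.continuousOn
  refine ⟨⟨max B 0, le_max_right _ _⟩,
    (convex_closedBall _ _).lipschitzOnWith_of_nnnorm_hasFDerivWithin_le
    (fun x _ => (hF.differentiable (by norm_num) x).hasFDerivAt.hasFDerivWithinAt)
    (fun x hx => ?_)⟩
  refine NNReal.coe_le_coe.mp ?_
  exact le_trans (hB x hx) (le_max_left _ _)

end Main

theorem stmt9 {n : ℕ} (f : EuclideanSpace ℝ (Fin n) → ℝ)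
    (hf : ContDiff ℝ (⊤ : ℕ∞) f) (hfpos : ∀ x, 0 < f x)
    (m : ℝ) (hm : 0 < m) (hfm : ∀ x, m ≤ f x) :
    ∀ (s₀ : ℝ) (x₀ v₀ : EuclideanSpace ℝ (Fin n)),
      ∃ σ σ' : ℝ → EuclideanSpace ℝ (Fin n),
        IsSpacelikeGeo f σ σ' Set.univ ∧ σ s₀ = x₀ ∧ σ' s₀ = v₀ := by
  intro s₀ x₀ v₀
  set C : ℝ := f x₀ * ‖v₀‖ / m with hCdef
  have hC0 : 0 ≤ C := div_nonneg (mul_nonneg (hfpos x₀).le (norm_nonneg _)) hm.le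
  have hex : ∀ k : ℕ, ∃ γ : ℝ → EuclideanSpace ℝ (Fin n) × EuclideanSpace ℝ (Fin n),
      γ 0 = (x₀, v₀) ∧
      (∀ τ ∈ Icc (-((k:ℝ)+1)) ((k:ℝ)+1), HasDerivAt γ (geoF f (γ τ)) τ) ∧
      (∀ τ ∈ Icc (-((k:ℝ)+1)) ((k:ℝ)+1), ‖(γ τ).1 - x₀‖ ≤ C * ((k:ℝ)+1) ∧ ‖(γ τ).2‖ ≤ C) :=
    fun k => perT hf hfpos hm hfm x₀ v₀ (T := (k:ℝ)+1) (by positivity)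
  choose Γ hΓ0 hΓode hΓbd using hex
  -- uniqueness on overlaps
  have huniq : ∀ j k : ℕ, ∀ t ∈ Icc (-(((min j k : ℕ):ℝ)+1)) (((min j k : ℕ):ℝ)+1),
      Γ j t = Γ k t := by
    intro j k
    set Tm : ℝ := ((min j k : ℕ):ℝ) + 1 with hTmdef
    set ρ : ℝ := ‖x₀‖ + C * (((max j k : ℕ):ℝ)+1) + C + 1 with hρdef
    obtain ⟨K, hK⟩ := myLipOnBall hf hfpos ρ
    have hTm0 : (0:ℝ) < Tm := by positivity
    have hsub : ∀ i : ℕ, min j k ≤ i →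
        Icc (-Tm) Tm ⊆ Icc (-((i:ℝ)+1)) ((i:ℝ)+1) := by
      intro i hi
      have : Tm ≤ (i:ℝ)+1 := by
        rw [hTmdef]
        have := (Nat.cast_le (α := ℝ)).mpr hi
        linarith
      exact Icc_subset_Icc (by linarith) this
    have hmem : ∀ i : ℕ, i ≤ max j k → min j k ≤ i → ∀ t ∈ Ioo (-Tm) Tm,
        Γ i t ∈ Metric.closedBall
          (0 : EuclideanSpace ℝ (Fin n) × EuclideanSpace ℝ (Fin n)) ρ := by
      intro i hi hi' t ht
      have ht' : t ∈ Icc (-((i:ℝ)+1)) ((i:ℝ)+1) :=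
        hsub i hi' (Ioo_subset_Icc_self ht)
      obtain ⟨hb1, hb2⟩ := hΓbd i t ht'
      rw [mem_closedBall_zero_iff]
      have hnorm : ‖Γ i t‖ = max ‖(Γ i t).1‖ ‖(Γ i t).2‖ := rfl
      rw [hnorm]
      have h1 : ‖(Γ i t).1‖ ≤ ‖x₀‖ + C * ((i:ℝ)+1) := by
        have := norm_add_le ((Γ i t).1 - x₀) x₀
        rw [sub_add_cancel] at this
        linarith
      have h2 : C * ((i:ℝ)+1) ≤ C * (((max j k : ℕ):ℝ)+1) := by
        apply mul_le_mul_of_nonneg_left _ hC0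
        have := (Nat.cast_le (α := ℝ)).mpr hi
        linarith
      have hn0 : 0 ≤ ‖x₀‖ := norm_nonneg _
      have hCM : 0 ≤ C * (((max j k : ℕ):ℝ)+1) := mul_nonneg hC0 (by positivity)
      apply max_le <;> [linarith; linarith]
    have hcontOn : ∀ i : ℕ, min j k ≤ i → ContinuousOn (Γ i) (Icc (-Tm) Tm) := by
      intro i hi t ht
      exact ((hΓode i t (hsub i hi ht)).continuousAt).continuousWithinAt
    have hderiv : ∀ i : ℕ, min j k ≤ i → ∀ t ∈ Ioo (-Tm) Tm,
        HasDerivAt (Γ i) (geoF f (Γ i t)) t := by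
      intro i hi t ht
      exact hΓode i t (hsub i hi (Ioo_subset_Icc_self ht))
    exact ODE_solution_unique_of_mem_Icc (fun _ _ => hK)
      (by constructor <;> linarith : (0:ℝ) ∈ Ioo (-Tm) Tm)
      (hcontOn j (min_le_left _ _)) (hderiv j (min_le_left _ _))
      (hmem j (le_max_left _ _) (min_le_left _ _))
      (hcontOn k (min_le_right _ _)) (hderiv k (min_le_right _ _))
      (hmem k (le_max_right _ _) (min_le_right _ _))
      (by rw [hΓ0, hΓ0])
  -- the glued curve
  set σf : ℝ → EuclideanSpace ℝ (Fin n) × EuclideanSpace ℝ (Fin n) :=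
    fun t => Γ ⌈|t|⌉₊ t with hσfdef
  have hσf0 : σf 0 = (x₀, v₀) := by
    rw [hσfdef]
    simp only [abs_zero, Nat.ceil_zero]
    exact hΓ0 0
  have heqloc : ∀ k : ℕ, ∀ t ∈ Ioo (-((k:ℝ)+1)) ((k:ℝ)+1), σf t = Γ k t := by
    intro k t ht
    have habs : |t| < (k:ℝ)+1 := abs_lt.mpr ⟨by linarith [ht.1], ht.2⟩
    set j : ℕ := ⌈|t|⌉₊ with hjdef
    have hj : |t| ≤ (j:ℝ) := Nat.le_ceil _
    have hmin : |t| ≤ ((min j k : ℕ):ℝ) + 1 := by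
      rcases le_total j k with h | h
      · rw [min_eq_left h]; linarith
      · rw [min_eq_right h]; linarith
    exact huniq j k t (abs_le.mp hmin |> fun h => ⟨h.1, h.2⟩)
  have hσfode : ∀ t : ℝ, HasDerivAt σf (geoF f (σf t)) t := by
    intro t
    set k : ℕ := ⌈|t|⌉₊ with hkdef
    have habs : |t| < (k:ℝ)+1 := lt_of_le_of_lt (Nat.le_ceil _) (lt_add_one _)
    have htIoo : t ∈ Ioo (-((k:ℝ)+1)) ((k:ℝ)+1) := by
      have := abs_lt.mp habs
      exact ⟨this.1, this.2⟩
    have hev : σf =ᶠ[nhds t] Γ k := by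
      filter_upwards [Ioo_mem_nhds htIoo.1 htIoo.2] with s hs
      exact heqloc k s hs
    have hd : HasDerivAt (Γ k) (geoF f (Γ k t)) t :=
      hΓode k t (Ioo_subset_Icc_self htIoo)
    have := hd.congr_of_eventuallyEq hev
    rwa [← heqloc k t htIoo] at this
  -- shift time and project
  refine ⟨fun s => (σf (s - s₀)).1, fun s => (σf (s - s₀)).2, ⟨?_, ?_⟩, ?_, ?_⟩
  · intro s _
    have hshift : HasDerivAt (fun t => σf (t - s₀)) (geoF f (σf (s - s₀))) s := by
      have h1 : HasDerivAt (fun t : ℝ => t - s₀) 1 s := (hasDerivAt_id s).sub_const s₀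
      have := (hσfode (s - s₀)).scomp s h1
      simpa [Function.comp_def] using this
    exact myCompFst hshift
  · intro s _
    have hshift : HasDerivAt (fun t => σf (t - s₀)) (geoF f (σf (s - s₀))) s := by
      have h1 : HasDerivAt (fun t : ℝ => t - s₀) 1 s := (hasDerivAt_id s).sub_const s₀
      have := (hσfode (s - s₀)).scomp s h1
      simpa [Function.comp_def] using this
    exact myCompSnd hshift
  · show (σf (s₀ - s₀)).1 = x₀
    rw [sub_self, hσf0]
  · show (σf (s₀ - s₀)).2 = v₀
    rw [sub_self, hσf0]
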